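/- arXiv:1603.09603 — 3 statements merged into one kernel-verified Lean document; each statement's English description precedes it below -/
import Mathlib

section
/- Let $V>0$, $\chi>0$, and real numbers $a<b$. Let $f\colon [0,V]\to\mathbb{R}$ be continuously differentiable with $f(0)=0$, $f(V)=\chi$, and $a\le f'(x)\le b$ for all $x\in[0,V]$. Then $\int_0^V f(x)\,dx \le -\tfrac{a}{2}V^2 - \tfrac{(\chi - aV)^2}{2(b-a)} + V\chi$. -/
open Real Set intervalIntegral

theorem extremal_lemma (V χ a b : ℝ) (hV : 0 < V) (hχ : 0 < χ) (hab : a < b)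
    (f f' : ℝ → ℝ)
    (hderiv : ∀ x ∈ Set.Icc 0 V, HasDerivAt f (f' x) x)
    (hcont : ContinuousOn f' (Set.Icc 0 V))
    (hf0 : f 0 = 0) (hfV : f V = χ)
    (hbound : ∀ x ∈ Set.Icc 0 V, a ≤ f' x ∧ f' x ≤ b) :
    ∫ x in (0:ℝ)..V, f x ≤ -a/2 * V^2 - (χ - a*V)^2 / (2*(b-a)) + V * χ := by
  have hba : (0:ℝ) < b - a := sub_pos.2 hab
  set δ := (χ - a*V)/(b-a) with hδ
  have hfc : ContinuousOn f (Set.Icc 0 V) := fun x hx =>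
    (hderiv x hx).continuousAt.continuousWithinAt
  have hint : ∀ x y, x ∈ Set.Icc 0 V → y ∈ Set.Icc 0 V →
      IntervalIntegrable f' MeasureTheory.volume x y := fun x y hx hy =>
    (hcont.mono (Set.uIcc_subset_Icc hx hy)).intervalIntegrable
  have key : ∀ x y, x ∈ Set.Icc 0 V → y ∈ Set.Icc 0 V → x ≤ y →
      a*(y-x) ≤ f y - f x ∧ f y - f x ≤ b*(y-x) := by
    intro x y hx hy hxy
    have heq : ∫ t in x..y, f' t = f y - f x := by
      apply intervalIntegral.integral_eq_sub_of_hasDerivAt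
      · intro t ht
        exact hderiv t (Set.uIcc_subset_Icc hx hy ht)
      · exact hint x y hx hy
    have hmem : ∀ t ∈ Set.Icc x y, t ∈ Set.Icc 0 V := fun t ht =>
      ⟨le_trans hx.1 ht.1, le_trans ht.2 hy.2⟩
    constructor
    · have := intervalIntegral.integral_mono_on hxy intervalIntegrable_const
        (hint x y hx hy) (fun t ht => (hbound t (hmem t ht)).1)
      simpa [heq, mul_comm] using this
    · have := intervalIntegral.integral_mono_on hxy (hint x y hx hy)
        intervalIntegrable_const (fun t ht => (hbound t (hmem t ht)).2)
      simpa [heq, mul_comm] using this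
  have h0V : (0:ℝ) ∈ Set.Icc 0 V := ⟨le_refl 0, hV.le⟩
  have hVV : V ∈ Set.Icc 0 V := ⟨hV.le, le_refl V⟩
  obtain ⟨haV, hbV⟩ := key 0 V h0V hVV hV.le
  rw [hf0, hfV, sub_zero, sub_zero] at haV hbV
  have hδ0 : 0 ≤ δ := div_nonneg (by linarith) hba.le
  have hδV : δ ≤ V := by
    rw [hδ, div_le_iff₀ hba]
    nlinarith
  have hδmem : δ ∈ Set.Icc 0 V := ⟨hδ0, hδV⟩
  -- pointwise bounds
  have hub1 : ∀ x ∈ Set.Icc 0 δ, f x ≤ b * x := by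
    intro x hx
    have hxm : x ∈ Set.Icc 0 V := ⟨hx.1, le_trans hx.2 hδV⟩
    have := (key 0 x h0V hxm hx.1).2
    rw [hf0, sub_zero, sub_zero] at this
    exact this
  have hub2 : ∀ x ∈ Set.Icc δ V, f x ≤ χ - a*(V - x) := by
    intro x hx
    have hxm : x ∈ Set.Icc 0 V := ⟨le_trans hδ0 hx.1, hx.2⟩
    have := (key x V hxm hVV hx.2).1
    rw [hfV] at this
    linarith
  -- integrability of f on pieces
  have hfint1 : IntervalIntegrable f MeasureTheory.volume 0 δ :=
    (hfc.mono (Set.uIcc_subset_Icc h0V hδmem)).intervalIntegrable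
  have hfint2 : IntervalIntegrable f MeasureTheory.volume δ V :=
    (hfc.mono (Set.uIcc_subset_Icc hδmem hVV)).intervalIntegrable
  have hsplit : ∫ x in (0:ℝ)..V, f x = (∫ x in (0:ℝ)..δ, f x) + ∫ x in δ..V, f x :=
    (intervalIntegral.integral_add_adjacent_intervals hfint1 hfint2).symm
  have hg1int : IntervalIntegrable (fun x => b * x) MeasureTheory.volume 0 δ :=
    (intervalIntegral.intervalIntegrable_id.const_mul b)
  have hg2int : IntervalIntegrable (fun x => χ - a*(V - x)) MeasureTheory.volume δ V := by
    apply Continuous.intervalIntegrable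
    continuity
  have hI1 : (∫ x in (0:ℝ)..δ, f x) ≤ ∫ x in (0:ℝ)..δ, b * x :=
    intervalIntegral.integral_mono_on hδ0 hfint1 hg1int hub1
  have hI2 : (∫ x in δ..V, f x) ≤ ∫ x in δ..V, (χ - a*(V - x)) :=
    intervalIntegral.integral_mono_on hδV hfint2 hg2int hub2
  have hc1 : (∫ x in (0:ℝ)..δ, b * x) = b * (δ^2 / 2) := by
    rw [intervalIntegral.integral_const_mul, integral_id]
    ring
  have hc2 : (∫ x in δ..V, (χ - a*(V - x))) = (V - δ)*(χ - a*V) + a*((V^2 - δ^2)/2) := by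
    have heq : (fun x => χ - a*(V - x)) = fun x => (χ - a*V) + a*x := by
      funext x; ring
    rw [heq, intervalIntegral.integral_add intervalIntegrable_const
      (intervalIntegral.intervalIntegrable_id.const_mul a),
      intervalIntegral.integral_const, intervalIntegral.integral_const_mul, integral_id]
    simp [smul_eq_mul]
  have hfinal : b * (δ^2 / 2) + ((V - δ)*(χ - a*V) + a*((V^2 - δ^2)/2)) =
      -a/2 * V^2 - (χ - a*V)^2 / (2*(b-a)) + V * χ := by
    rw [hδ]
    field_simp
    ring
  linarith [hI1, hI2]
end

section
/- Let $V>0$, $\chi>0$, $a<b$, and let $f\colon[0,V]\to\mathbb{R}$ be $C^1$ with $f(0)=0$, $f(V)=\chi$, $a\le f'\le b$. If $\int_0^V f(x)\,dx = -\tfrac{a}{2}V^2 - \tfrac{(\chi-aV)^2}{2(b-a)} + V\chi$, then, with $\delta=\frac{\chi-aV}{b-a}$, $f(x)=bx$ for $x\in[0,\delta]$ and $f(x)=a(x-V)+\chi$ for $x\in[\delta,V]$. -/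
/-!
By the mean value theorem the slope bounds give `f x ≤ b x` (starting from `f 0 = 0`) and
`f x ≤ a (x - V) + χ` (ending at `f V = χ`), so `f` lies below the tent
`min (b x) (a (x - V) + χ)`, whose corner is at `δ = (χ - a V) / (b - a)`. The integral of the
tent is exactly the prescribed value, so the continuous nonnegative gap between the tent and `f`
has integral zero and vanishes identically.
-/

open Real Set intervalIntegral

def extremal (V χ a b : ℝ) (x : ℝ) : ℝ := min (b * x) (a * (x - V) + χ)

section
variable {V χ a b : ℝ}

lemma extremal_eq_left (hab : a < b) {x : ℝ} (hx : x ≤ (χ - a * V) / (b - a)) :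
    extremal V χ a b x = b * x := by
  rw [le_div_iff₀ (sub_pos.2 hab)] at hx
  exact min_eq_left (by linarith)

lemma extremal_eq_right (hab : a < b) {x : ℝ} (hx : (χ - a * V) / (b - a) ≤ x) :
    extremal V χ a b x = a * (x - V) + χ := by
  rw [div_le_iff₀ (sub_pos.2 hab)] at hx
  exact min_eq_right (by linarith)

lemma continuous_extremal : Continuous (extremal V χ a b) := by
  unfold extremal; fun_prop

lemma integral_extremal (hab : a < b) (hδ₀ : 0 ≤ (χ - a * V) / (b - a))
    (hδV : (χ - a * V) / (b - a) ≤ V) :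
    ∫ x in (0 : ℝ)..V, extremal V χ a b x =
      -a / 2 * V ^ 2 - (χ - a * V) ^ 2 / (2 * (b - a)) + V * χ := by
  set δ := (χ - a * V) / (b - a) with hδ
  have hcont := continuous_extremal (V := V) (χ := χ) (a := a) (b := b)
  rw [← integral_add_adjacent_intervals (b := δ) (hcont.intervalIntegrable _ _)
    (hcont.intervalIntegrable _ _),
    integral_congr (g := fun x => b * x) fun x hx => extremal_eq_left hab (by
      rw [uIcc_of_le hδ₀] at hx; exact hx.2),
    integral_congr (g := fun x => a * (x - V) + χ) fun x hx => extremal_eq_right hab (by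
      rw [uIcc_of_le hδV] at hx; exact hx.1)]
  rw [intervalIntegral.integral_const_mul, integral_id,
    intervalIntegral.integral_add (Continuous.intervalIntegrable (by fun_prop) _ _)
      intervalIntegrable_const,
    intervalIntegral.integral_const_mul, intervalIntegral.integral_comp_sub_right (fun x => x),
    integral_id, intervalIntegral.integral_const, smul_eq_mul]
  have hba : b - a ≠ 0 := (sub_pos.2 hab).ne'
  rw [hδ]
  field_simp
  ring

lemma le_extremal {f f' : ℝ → ℝ} (hderiv : ∀ x ∈ Icc 0 V, HasDerivAt f (f' x) x)
    (hf0 : f 0 = 0) (hfV : f V = χ) (hbound : ∀ x ∈ Icc 0 V, a ≤ f' x ∧ f' x ≤ b) :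
    ∀ x ∈ Icc 0 V, f x ≤ extremal V χ a b x := by
  have hcont : ContinuousOn f (Icc 0 V) := fun x hx =>
    (hderiv x hx).continuousAt.continuousWithinAt
  have hdiff : DifferentiableOn ℝ f (interior (Icc 0 V)) := fun x hx =>
    (hderiv x (interior_subset hx)).differentiableAt.differentiableWithinAt
  have hderiv_eq : ∀ x ∈ interior (Icc 0 V), deriv f x = f' x := fun x hx =>
    (hderiv x (interior_subset hx)).deriv
  intro x hx
  have h0 : (0 : ℝ) ∈ Icc 0 V := left_mem_Icc.2 (hx.1.trans hx.2)
  have hV : V ∈ Icc 0 V := right_mem_Icc.2 (hx.1.trans hx.2)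
  have hslope_b := (convex_Icc 0 V).image_sub_le_mul_sub_of_deriv_le hcont hdiff
    (fun y hy => (hderiv_eq y hy).symm ▸ (hbound y (interior_subset hy)).2) 0 h0 x hx hx.1
  have hslope_a := (convex_Icc 0 V).mul_sub_le_image_sub_of_le_deriv hcont hdiff
    (fun y hy => (hderiv_eq y hy).symm ▸ (hbound y (interior_subset hy)).1) x hx V hV hx.2
  exact le_min (by linarith) (by linarith)

end

theorem eqOn_of_le_of_integral_eq {f g : ℝ → ℝ} {a b : ℝ} (hab : a < b)
    (hf : ContinuousOn f (Icc a b)) (hg : ContinuousOn g (Icc a b))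
    (hle : ∀ x ∈ Icc a b, f x ≤ g x) (heq : ∫ x in a..b, f x = ∫ x in a..b, g x) :
    EqOn f g (Icc a b) := by
  by_contra hne
  obtain ⟨c, hc, hfc⟩ := not_forall₂.1 hne
  exact (integral_lt_integral_of_continuousOn_of_le_of_exists_lt hab hf hg
    (fun x hx => hle x (Ioc_subset_Icc_self hx)) ⟨c, hc, (hle c hc).lt_of_ne hfc⟩).ne heq

theorem extremal_lemma_equality_general (V χ a b : ℝ) (hV : 0 < V) (hab : a < b)
    (f f' : ℝ → ℝ)
    (hderiv : ∀ x ∈ Set.Icc 0 V, HasDerivAt f (f' x) x)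
    (hf0 : f 0 = 0) (hfV : f V = χ)
    (hbound : ∀ x ∈ Set.Icc 0 V, a ≤ f' x ∧ f' x ≤ b)
    (heq : ∫ x in (0:ℝ)..V, f x = -a/2 * V^2 - (χ - a*V)^2 / (2*(b-a)) + V * χ) :
    (∀ x ∈ Set.Icc 0 ((χ - a*V)/(b-a)), f x = b * x) ∧
    (∀ x ∈ Set.Icc ((χ - a*V)/(b-a)) V, f x = a * (x - V) + χ) := by
  have hle := le_extremal hderiv hf0 hfV hbound
  have hδ₀ : 0 ≤ (χ - a * V) / (b - a) := by
    have := hle 0 (left_mem_Icc.2 hV.le)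
    simp only [extremal, hf0] at this
    exact div_nonneg (by linarith [le_min_iff.1 this]) (sub_pos.2 hab).le
  have hδV : (χ - a * V) / (b - a) ≤ V := by
    have := hle V (right_mem_Icc.2 hV.le)
    rw [div_le_iff₀ (sub_pos.2 hab)]
    simp only [extremal, hfV, sub_self] at this
    linarith [le_min_iff.1 this]
  have hf_eq : EqOn f (extremal V χ a b) (Icc 0 V) :=
    eqOn_of_le_of_integral_eq hV
      (fun x hx => (hderiv x hx).continuousAt.continuousWithinAt)
      continuous_extremal.continuousOn hle (heq.trans (integral_extremal hab hδ₀ hδV).symm)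
  exact ⟨fun x hx => (hf_eq ⟨hx.1, hx.2.trans hδV⟩).trans (extremal_eq_left hab hx.2),
    fun x hx => (hf_eq ⟨hδ₀.trans hx.1, hx.2⟩).trans (extremal_eq_right hab hx.1)⟩

theorem extremal_lemma_equality (V χ a b : ℝ) (hV : 0 < V) (hχ : 0 < χ) (hab : a < b)
    (f f' : ℝ → ℝ)
    (hderiv : ∀ x ∈ Set.Icc 0 V, HasDerivAt f (f' x) x)
    (hcont : ContinuousOn f' (Set.Icc 0 V))
    (hf0 : f 0 = 0) (hfV : f V = χ)
    (hbound : ∀ x ∈ Set.Icc 0 V, a ≤ f' x ∧ f' x ≤ b)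
    (heq : ∫ x in (0:ℝ)..V, f x = -a/2 * V^2 - (χ - a*V)^2 / (2*(b-a)) + V * χ) :
    (∀ x ∈ Set.Icc 0 ((χ - a*V)/(b-a)), f x = b * x) ∧
    (∀ x ∈ Set.Icc ((χ - a*V)/(b-a)) V, f x = a * (x - V) + χ) :=
  extremal_lemma_equality_general V χ a b hV hab f f' hderiv hf0 hfV hbound heq
end

section
/- Let $V>0$, $\chi>0$, $a<b$ with $b>0$, $\alpha,\beta\in(-1,0]$ with $\chi=2\pi(2+\alpha+\beta)$, and let $\mathbb{A}\colon[0,V]\to\mathbb{R}$ be Lipschitz with $\mathbb{A}(0)=0$, $\mathbb{A}(V)=\chi$, $a\le\mathbb{A}'\le b$ a.e., and $\int_0^V\mathbb{A}(s)\,ds\ge 2\pi(1+\alpha)V$. Then $abV^2-4\pi(a(1+\alpha)+b(1+\beta))V+\chi^2\le 0$. -/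
open Real Set intervalIntegral

theorem key_quadratic_inequality (V χ a b α β : ℝ)
    (hV : 0 < V) (hχ : 0 < χ) (hab : a < b) (hb : 0 < b)
    (hα : α ∈ Set.Ioc (-1 : ℝ) 0) (hβ : β ∈ Set.Ioc (-1 : ℝ) 0)
    (hχdef : χ = 2 * π * (2 + α + β))
    (A : ℝ → ℝ)
    (hA0 : A 0 = 0) (hAV : A V = χ)
    (hquot : ∀ s₁ ∈ Set.Icc 0 V, ∀ s₂ ∈ Set.Icc 0 V, s₁ < s₂ →
        a * (s₂ - s₁) ≤ A s₂ - A s₁ ∧ A s₂ - A s₁ ≤ b * (s₂ - s₁))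
    (hint : ∫ s in (0:ℝ)..V, A s ≥ 2 * π * (1 + α) * V) :
    a*b*V^2 - 4*π*(a*(1+α) + b*(1+β))*V + χ^2 ≤ 0 := by
  obtain ⟨hα1, hα0⟩ := hα
  obtain ⟨hβ1, hβ0⟩ := hβ
  have hba : 0 < b - a := by linarith
  -- endpoint bounds: aV ≤ χ ≤ bV
  have hchi : a * (V - 0) ≤ A V - A 0 ∧ A V - A 0 ≤ b * (V - 0) :=
    hquot 0 ⟨le_refl 0, hV.le⟩ V ⟨hV.le, le_refl V⟩ hV
  have hchi1 : a * V ≤ χ := by have := hchi.1; rw [hA0, hAV] at this; linarith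
  have hchi2 : χ ≤ b * V := by have := hchi.2; rw [hA0, hAV] at this; linarith
  obtain ⟨t, htE, ht0, htV⟩ : ∃ t, (b - a) * t = χ - a * V ∧ 0 ≤ t ∧ t ≤ V := by
    refine ⟨(χ - a * V) / (b - a), by field_simp, div_nonneg (by linarith) hba.le, ?_⟩
    rw [div_le_iff₀ hba]; nlinarith
  -- pointwise upper bounds
  have hub1 : ∀ s ∈ Icc (0:ℝ) V, A s ≤ b * s := by
    intro s hs
    rcases eq_or_lt_of_le hs.1 with h | h
    · simp [← h, hA0]
    · have := (hquot 0 ⟨le_refl 0, hV.le⟩ s hs h).2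
      rw [hA0] at this; linarith
  have hub2 : ∀ s ∈ Icc (0:ℝ) V, A s ≤ (χ - a * V) + a * s := by
    intro s hs
    rcases eq_or_lt_of_le hs.2 with h | h
    · rw [h, hAV]; ring_nf; linarith
    · have := (hquot s hs V ⟨hV.le, le_refl V⟩ h).1
      rw [hAV] at this; nlinarith
  -- Lipschitz continuity on [0, V]
  have hcont : ContinuousOn A (Icc 0 V) := by
    have hlip : LipschitzOnWith (Real.toNNReal (max |a| |b|)) A (Icc 0 V) := by
      apply LipschitzOnWith.of_dist_le_mul
      intro x hx y hy
      have hM : (Real.toNNReal (max |a| |b|) : ℝ) = max |a| |b| :=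
        Real.coe_toNNReal _ (le_trans (abs_nonneg a) (le_max_left _ _))
      rw [Real.dist_eq, Real.dist_eq, hM]
      have ha1 : a ≤ max |a| |b| := le_trans (le_abs_self a) (le_max_left _ _)
      have ha2 : -(max |a| |b|) ≤ a := by
        have := neg_abs_le a; have := le_max_left |a| |b|; linarith
      have hb1 : b ≤ max |a| |b| := le_trans (le_abs_self b) (le_max_right _ _)
      have hb2 : -(max |a| |b|) ≤ b := by
        have := neg_abs_le b; have := le_max_right |a| |b|; linarith
      rcases lt_trichotomy x y with h | h | h
      · obtain ⟨h1, h2⟩ := hquot x hx y hy h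
        rw [abs_of_neg (by linarith : x - y < 0)]
        rw [abs_le]
        constructor <;> nlinarith
      · simp [h]
      · obtain ⟨h1, h2⟩ := hquot y hy x hx h
        rw [abs_of_pos (by linarith : 0 < x - y)]
        rw [abs_le]
        constructor <;> nlinarith
    exact hlip.continuousOn
  -- integrability
  have hsub1 : Icc (0:ℝ) t ⊆ Icc 0 V := Icc_subset_Icc le_rfl htV
  have hsub2 : Icc t V ⊆ Icc (0:ℝ) V := Icc_subset_Icc ht0 le_rfl
  have hI1 : IntervalIntegrable A MeasureTheory.volume 0 t :=
    (hcont.mono (by rw [uIcc_of_le ht0]; exact hsub1)).intervalIntegrable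
  have hI2 : IntervalIntegrable A MeasureTheory.volume t V :=
    (hcont.mono (by rw [uIcc_of_le htV]; exact hsub2)).intervalIntegrable
  have hIb : IntervalIntegrable (fun s => b * s) MeasureTheory.volume 0 t :=
    (continuous_const.mul continuous_id).intervalIntegrable _ _
  have hIa : IntervalIntegrable (fun s => (χ - a * V) + a * s) MeasureTheory.volume t V :=
    (continuous_const.add (continuous_const.mul continuous_id)).intervalIntegrable _ _
  -- split the integral
  have hsplit : (∫ s in (0:ℝ)..V, A s) = (∫ s in (0:ℝ)..t, A s) + ∫ s in t..V, A s :=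
    (integral_add_adjacent_intervals hI1 hI2).symm
  -- bound each piece
  have hbd1 : (∫ s in (0:ℝ)..t, A s) ≤ ∫ s in (0:ℝ)..t, b * s :=
    integral_mono_on ht0 hI1 hIb (fun s hs => hub1 s (hsub1 hs))
  have hbd2 : (∫ s in t..V, A s) ≤ ∫ s in t..V, ((χ - a * V) + a * s) :=
    integral_mono_on htV hI2 hIa (fun s hs => hub2 s (hsub2 hs))
  -- compute the envelope integrals
  have hc1 : (∫ s in (0:ℝ)..t, b * s) = b * (t ^ 2 / 2) := by
    rw [intervalIntegral.integral_const_mul]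
    simp [integral_id]
  have hc2 : (∫ s in t..V, ((χ - a * V) + a * s))
      = (χ - a * V) * (V - t) + a * ((V ^ 2 - t ^ 2) / 2) := by
    have h1 : IntervalIntegrable (fun s : ℝ => a * s) MeasureTheory.volume t V :=
      intervalIntegrable_id.const_mul a
    rw [intervalIntegral.integral_add intervalIntegrable_const h1,
      intervalIntegral.integral_const, intervalIntegral.integral_const_mul, integral_id,
      smul_eq_mul]
    ring
  -- the key inequality
  have hkey : 2 * π * (1 + α) * V ≤
      b * (t ^ 2 / 2) + ((χ - a * V) * (V - t) + a * ((V ^ 2 - t ^ 2) / 2)) := by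
    rw [hsplit] at hint
    linarith [hbd1, hbd2, hc1.symm, hc2.symm, hc1, hc2]
  -- algebra
  have hχeq : χ = a * V + (b - a) * t := by linarith
  have hχsq : χ ^ 2 = (a * V + (b - a) * t) ^ 2 := by rw [hχeq]
  have hχbV : b * V * χ = b * V * (a * V + (b - a) * t) := by rw [hχeq]
  have h5 : 2 * b * V * (2 * π * (1 + β)) = 2 * b * V * (χ - 2 * π * (1 + α)) := by
    rw [hχdef]; ring
  have hkey' : 2 * π * (1 + α) * V ≤
      b * (t ^ 2 / 2) + ((b - a) * t * (V - t) + a * ((V ^ 2 - t ^ 2) / 2)) := by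
    have heq : (χ - a * V) * (V - t) = (b - a) * t * (V - t) := by rw [← htE]
    linarith
  have hmul := mul_le_mul_of_nonneg_left hkey' hba.le
  linarith [hmul, hχsq, hχbV, h5]
end
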